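/- arXiv:1402.2034 — 4 statements merged into one kernel-verified Lean document; each statement's English description precedes it below -/
import Mathlib

section
/- A permutation π is sorted by the stack sorting operator S (i.e., S(π) is the identity permutation, the increasing list of its values) if and only if π avoids the pattern 231. -/
/-- Stack sorting with fuel (fuel = length always suffices). -/
def stackSortAux : ℕ → List ℕ → List ℕ
  | 0, _ => []
  | _ + 1, [] => []
  | fuel + 1, x :: xs =>
    let l := x :: xs
    let m := l.foldr max 0
    stackSortAux fuel (l.takeWhile (· ≠ m)) ++
      stackSortAux fuel ((l.dropWhile (· ≠ m)).tail) ++ [m]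

/-- The stack sorting operator `S`: `S(ε) = ε` and `S(α n β) = S(α) S(β) n`
where `n` is the maximum element. -/
def stackSort (l : List ℕ) : List ℕ := stackSortAux l.length l

/-- `σ` avoids the pattern 231. -/
def Avoids231 (σ : List ℕ) : Prop :=
  ¬ ∃ i j k, i < j ∧ j < k ∧ k < σ.length ∧
      σ.getD k 0 < σ.getD i 0 ∧ σ.getD i 0 < σ.getD j 0

/-- `σ` avoids the pattern 132. -/
def Avoids132 (σ : List ℕ) : Prop :=
  ¬ ∃ i j k, i < j ∧ j < k ∧ k < σ.length ∧
      σ.getD i 0 < σ.getD k 0 ∧ σ.getD k 0 < σ.getD j 0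

/-- Binary trees with natural number labels. -/
inductive BTree where
  | leaf : BTree
  | node : BTree → ℕ → BTree → BTree

def BTree.inorder : BTree → List ℕ
  | .leaf => []
  | .node l n r => l.inorder ++ [n] ++ r.inorder

def BTree.postorder : BTree → List ℕ
  | .leaf => []
  | .node l n r => l.postorder ++ r.postorder ++ [n]

/-- A tree is decreasing when labels strictly decrease from root to leaves. -/
def BTree.Decreasing : BTree → Prop
  | .leaf => True
  | .node l n r =>
      l.Decreasing ∧ r.Decreasing ∧
      (∀ x ∈ l.inorder, x < n) ∧ (∀ x ∈ r.inorder, x < n)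

/-- The underlying unlabeled shape of a tree (labels replaced by `0`). -/
def BTree.shape : BTree → BTree
  | .leaf => .leaf
  | .node l _ r => .node l.shape 0 r.shape

def BTree.map (f : ℕ → ℕ) : BTree → BTree
  | .leaf => .leaf
  | .node l n r => .node (l.map f) (f n) (r.map f)

/-- Labels on the rightmost branch from the root. -/
def BTree.rightBranch : BTree → List ℕ
  | .leaf => []
  | .node _ n r => n :: r.rightBranch

/-- Labels on the leftmost branch from the root. -/
def BTree.leftBranch : BTree → List ℕ
  | .leaf => []
  | .node l n _ => n :: l.leftBranch

def TinAux : ℕ → List ℕ → BTree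
  | 0, _ => .leaf
  | _ + 1, [] => .leaf
  | fuel + 1, x :: xs =>
    let l := x :: xs
    let m := l.foldr max 0
    .node (TinAux fuel (l.takeWhile (· ≠ m))) m
          (TinAux fuel ((l.dropWhile (· ≠ m)).tail))

/-- The decreasing binary tree whose in-order reading is `l`. -/
def Tin (l : List ℕ) : BTree := TinAux l.length l

def PpermAux : ℕ → List ℕ → List ℕ
  | 0, _ => []
  | _ + 1, [] => []
  | fuel + 1, x :: xs =>
    let l := x :: xs
    let m := l.foldr max 0
    let α := l.takeWhile (· ≠ m)
    let β := (l.dropWhile (· ≠ m)).tail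
    (PpermAux fuel α).map (· + β.length) ++ [m] ++
      PpermAux fuel (β.map (· - α.length))

/-- The bijection `P` from 231-avoiding to 132-avoiding permutations,
`P(ε) = ε` and `P(α ⊕ (1 ⊖ β)) = (P(α) ⊕ 1) ⊖ P(β)`. -/
def Pperm (l : List ℕ) : List ℕ := PpermAux l.length l

/-- Direct sum of permutations: `α ⊕ β`. -/
def osum (α β : List ℕ) : List ℕ := α ++ β.map (· + α.length)

/-- Skew sum of permutations: `α ⊖ β`. -/
def ossum (α β : List ℕ) : List ℕ := α.map (· + β.length) ++ β

def lrP : ℕ → List ℕ × List ℕ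
  | 0 => ([], [])
  | m + 1 => (ossum [1] (lrP m).2, osum (lrP m).1 [1])

/-- `λ_n`: `λ_{m+1} = 1 ⊖ ρ_m`. -/
def lamP (n : ℕ) : List ℕ := (lrP n).1

/-- `ρ_n`: `ρ_{m+1} = λ_m ⊕ 1`. -/
def rhoP (n : ℕ) : List ℕ := (lrP n).2

/-- `s` and `p` are order isomorphic lists. -/
def OrderIsoList (s p : List ℕ) : Prop :=
  s.length = p.length ∧
  ∀ i j, i < s.length → j < s.length →
    (s.getD i 0 < s.getD j 0 ↔ p.getD i 0 < p.getD j 0)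

/-- `σ` contains the pattern `π`. -/
def Contains (σ π : List ℕ) : Prop :=
  ∃ s : List ℕ, s.Sublist σ ∧ OrderIsoList s π

/-- The up-down word of a permutation (`true` = ascent `u`, `false` = descent `d`). -/
def updown (l : List ℕ) : List Bool :=
  (l.zip l.tail).map (fun p => decide (p.1 < p.2))

/-- No value larger than `max x y` occurs (strictly) between `x` and `y` in `l`. -/
def NoLargerBetween (l : List ℕ) (x y : ℕ) : Prop :=
  ∀ i j k, i < j → j < k → k < l.length →
    ((l.getD i 0 = x ∧ l.getD k 0 = y) ∨ (l.getD i 0 = y ∧ l.getD k 0 = x)) →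
    l.getD j 0 ≤ max x y

/-- The basic operators: stack sorting `S` and reversal `R`. -/
inductive SOp where
  | s : SOp
  | r : SOp

def applyOp : SOp → List ℕ → List ℕ
  | .s => stackSort
  | .r => List.reverse

/-- A composition of operators from `{S, R}`. -/
def applyOps (ops : List SOp) : List ℕ → List ℕ :=
  ops.foldr (fun op f => applyOp op ∘ f) id

/-- `i` is the position of a left-to-right maximum of `l`. -/
def LRmaxPos (l : List ℕ) (i : ℕ) : Prop :=
  i < l.length ∧ ∀ j, j < i → l.getD j 0 < l.getD i 0

/-- `i` is the position of a right-to-left maximum of `l`. -/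
def RLmaxPos (l : List ℕ) (i : ℕ) : Prop :=
  i < l.length ∧ ∀ j, i < j → j < l.length → l.getD j 0 < l.getD i 0

/-- The reverse Zeilberger statistic: the largest `k` such that
`(n-k+1) … (n-1) n` is a subword of `l`, where `n = l.length`. -/
noncomputable def Rzeil (l : List ℕ) : ℕ :=
  sSup {k | (List.range' (l.length - k + 1) k).Sublist l}

/-!
Split `π = α n β` at its maximum `n`, with `n ∉ α`, so that `S(π) = S(α) S(β) n`. Since `S`
permutes its input, `S(π)` is sorted iff `S(α)` and `S(β)` are sorted and every entry of `α` is
at most every entry of `β`. On the other side, `π` avoids 231 iff `α` and `β` do and again no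
entry of `β` lies below an entry of `α`: such a pair `a ∈ α`, `b ∈ β` forms the 231 `a n b`,
and every occurrence of 231 not inside `α` or `β` contains such a pair. Induction on the
length finishes the proof.
-/

theorem List.exists_eq_append_cons_max {α : Type*} [LinearOrder α] {l : List α} (hl : l ≠ []) :
    ∃ A m B, l = A ++ m :: B ∧ (∀ x ∈ A, x < m) ∧ ∀ x ∈ B, x ≤ m := by
  induction l with
  | nil => exact absurd rfl hl
  | cons y t ih =>
    rcases eq_or_ne t [] with rfl | ht
    · exact ⟨[], y, [], rfl, by simp, by simp⟩
    obtain ⟨A, m, B, rfl, hA, hB⟩ := ih ht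
    rcases lt_or_ge y m with hy | hy
    · exact ⟨y :: A, m, B, rfl, by simpa [hy] using hA, hB⟩
    · refine ⟨[], y, A ++ m :: B, rfl, by simp, fun x hx => ?_⟩
      simp only [List.mem_append, List.mem_cons] at hx
      rcases hx with hx | rfl | hx
      exacts [(hA x hx).le.trans hy, hy, (hB x hx).trans hy]

theorem List.induction_on_max {α : Type*} [LinearOrder α] {P : List α → Prop} (l : List α)
    (nil : P [])
    (append_cons : ∀ A m B, (∀ x ∈ A, x < m) → (∀ x ∈ B, x ≤ m) → P A → P B →
      P (A ++ m :: B)) :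
    P l := by
  rcases eq_or_ne l [] with rfl | hl
  · exact nil
  obtain ⟨A, m, B, rfl, hA, hB⟩ := l.exists_eq_append_cons_max hl
  exact append_cons A m B hA hB (A.induction_on_max nil append_cons)
    (B.induction_on_max nil append_cons)
termination_by l.length
decreasing_by all_goals subst_vars; simp only [List.length_append, List.length_cons]; omega

theorem stackSortAux_append_cons {A B : List ℕ} {m : ℕ} (hA : ∀ x ∈ A, x < m)
    (hB : ∀ x ∈ B, x ≤ m) (n : ℕ) :
    stackSortAux (n + 1) (A ++ m :: B) = stackSortAux n A ++ stackSortAux n B ++ [m] := by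
  have hmax : (A ++ m :: B).foldr max 0 = m :=
    le_antisymm (List.max_le_of_forall_le _ _ fun x hx => by
        simp only [List.mem_append, List.mem_cons] at hx
        rcases hx with hx | rfl | hx
        exacts [(hA x hx).le, le_rfl, hB x hx])
      (List.le_max_of_le (List.mem_append_right A List.mem_cons_self) le_rfl)
  have hA' : ∀ x ∈ A, decide (x ≠ m) = true := fun x hx => by simpa using (hA x hx).ne
  have htake : (A ++ m :: B).takeWhile (decide <| · ≠ m) = A := by
    rw [List.takeWhile_append_of_pos hA', List.takeWhile_cons_of_neg (by simp), List.append_nil]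
  have hdrop : ((A ++ m :: B).dropWhile (decide <| · ≠ m)).tail = B := by
    rw [List.dropWhile_append_of_pos hA', List.dropWhile_cons_of_neg (by simp), List.tail_cons]
  obtain ⟨x, xs, hx⟩ :=
    List.exists_cons_of_ne_nil (List.append_ne_nil_of_right_ne_nil A (List.cons_ne_nil m B))
  rw [hx, stackSortAux, ← hx]
  simp only [hmax, htake, hdrop]

theorem stackSortAux_eq_stackSort {n : ℕ} {l : List ℕ} (hn : l.length ≤ n) :
    stackSortAux n l = stackSort l := by
  induction l using List.induction_on_max generalizing n with
  | nil => cases n <;> rfl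
  | append_cons A m B hA hB ihA ihB =>
    obtain ⟨n, rfl⟩ := Nat.exists_eq_add_one_of_ne_zero (n := n) (by simp at hn; omega)
    simp only [List.length_append, List.length_cons] at hn
    rw [stackSort, List.length_append, List.length_cons, ← Nat.add_assoc,
      stackSortAux_append_cons hA hB, stackSortAux_append_cons hA hB,
      ihA (by omega), ihA (by omega), ihB (by omega), ihB (by omega)]

theorem stackSort_append_cons {A B : List ℕ} {m : ℕ} (hA : ∀ x ∈ A, x < m)
    (hB : ∀ x ∈ B, x ≤ m) : stackSort (A ++ m :: B) = stackSort A ++ stackSort B ++ [m] := by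
  rw [stackSort, List.length_append, List.length_cons, ← Nat.add_assoc,
    stackSortAux_append_cons hA hB, stackSortAux_eq_stackSort (by omega),
    stackSortAux_eq_stackSort (by omega)]

theorem stackSort_perm (l : List ℕ) : (stackSort l).Perm l := by
  induction l using List.induction_on_max with
  | nil => rfl
  | append_cons A m B hA hB ihA ihB =>
    rw [stackSort_append_cons hA hB, List.append_assoc]
    exact ihA.append (ihB.append_right [m] |>.trans (List.perm_append_singleton m B))

theorem avoids231_iff_forall_sublist {l : List ℕ} :
    Avoids231 l ↔ ∀ a b c, [a, b, c].Sublist l → ¬(c < a ∧ a < b) := by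
  constructor
  · rintro h a b c hs ⟨hca, hab⟩
    obtain ⟨is, his, hinc⟩ := List.sublist_eq_map_getElem hs
    rcases is with _ | ⟨i, _ | ⟨j, _ | ⟨k, _ | _⟩⟩⟩ <;> simp at his
    obtain ⟨rfl, rfl, rfl⟩ := his
    simp only [List.pairwise_cons, List.mem_cons, List.not_mem_nil] at hinc
    refine h ⟨i, j, k, hinc.1 j (by simp), hinc.2.1 k (by simp), k.isLt, ?_⟩
    simpa [List.getD_eq_getElem] using ⟨hca, hab⟩
  · rintro h ⟨i, j, k, hij, hjk, hk, hki, hij'⟩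
    simp only [List.getD_eq_getElem?_getD, List.getElem?_eq_getElem (show i < l.length by omega),
      List.getElem?_eq_getElem (show j < l.length by omega), List.getElem?_eq_getElem hk,
      Option.getD_some] at hki hij'
    refine h _ _ _ ?_ ⟨hki, hij'⟩
    simpa using List.map_getElem_sublist (l := l)
      (is := [⟨i, by omega⟩, ⟨j, by omega⟩, ⟨k, hk⟩]) (by simp; omega)

theorem avoids231_append_cons_iff {A B : List ℕ} {m : ℕ} (hA : ∀ x ∈ A, x < m)
    (hB : ∀ x ∈ B, x ≤ m) :
    Avoids231 (A ++ m :: B) ↔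
      Avoids231 A ∧ Avoids231 B ∧ ∀ a ∈ A, ∀ b ∈ B, a ≤ b := by
  simp only [avoids231_iff_forall_sublist]
  constructor
  · intro h
    refine ⟨fun a b c hs => h a b c (hs.trans (List.sublist_append_left A _)),
      fun a b c hs => h a b c (hs.trans ((List.sublist_cons_self m B).trans
        (List.sublist_append_right A _))), fun a ha b hb => ?_⟩
    by_contra! hba
    exact h a m b ((List.singleton_sublist.2 ha).append ((List.singleton_sublist.2 hb).cons_cons m))
      ⟨hba, hA a ha⟩
  · rintro ⟨hA', hB', hAB⟩ a b c hs ⟨hca, hab⟩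
    obtain ⟨l₁, l₂, heq, h₁, h₂⟩ := List.sublist_append_iff.1 hs
    have not_cross (ha : a ∈ A) (hc : c ∈ m :: B) : False := by
      rcases List.mem_cons.1 hc with rfl | hc
      · exact (hca.trans (hA a ha)).false
      · exact (hAB a ha c hc).not_gt hca
    rcases l₁ with _ | ⟨x, _ | ⟨y, _ | ⟨z, _ | ⟨w, l₁⟩⟩⟩⟩ <;>
      simp only [List.nil_append, List.cons_append, List.cons.injEq] at heq
    · rw [← heq] at h₂
      rcases List.sublist_cons_iff.1 h₂ with h₂ | ⟨r, hr, h₂⟩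
      · exact hB' a b c h₂ ⟨hca, hab⟩
      · obtain ⟨rfl, rfl⟩ := List.cons.inj hr
        exact (hB b (h₂.subset List.mem_cons_self)).not_gt hab
    · obtain ⟨rfl, rfl⟩ := heq
      exact not_cross (h₁.subset List.mem_cons_self) (h₂.subset (by simp))
    · obtain ⟨rfl, rfl, rfl⟩ := heq
      exact not_cross (h₁.subset List.mem_cons_self) (h₂.subset (by simp))
    · obtain ⟨rfl, rfl, rfl, rfl⟩ := heq
      exact hA' a b c (by simpa using h₁) ⟨hca, hab⟩
    · simp at heq

theorem pairwise_stackSort_append_cons_iff {A B : List ℕ} {m : ℕ} (hA : ∀ x ∈ A, x < m)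
    (hB : ∀ x ∈ B, x ≤ m) :
    (stackSort (A ++ m :: B)).Pairwise (· ≤ ·) ↔ (stackSort A).Pairwise (· ≤ ·) ∧
      (stackSort B).Pairwise (· ≤ ·) ∧ ∀ a ∈ A, ∀ b ∈ B, a ≤ b := by
  have hm : ∀ x ∈ stackSort A ++ stackSort B, ∀ y ∈ [m], x ≤ y := by
    simp only [List.mem_append, (stackSort_perm _).mem_iff, List.mem_singleton]
    rintro x (hx | hx) y rfl
    exacts [(hA x hx).le, hB x hx]
  rw [stackSort_append_cons hA hB, List.pairwise_append, List.pairwise_append,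
    and_iff_left ⟨List.pairwise_singleton _ m, hm⟩]
  simp only [(stackSort_perm _).mem_iff]

theorem pairwise_stackSort_iff_avoids231 (l : List ℕ) :
    (stackSort l).Pairwise (· ≤ ·) ↔ Avoids231 l := by
  induction l using List.induction_on_max with
  | nil => simp [stackSort, stackSortAux, avoids231_iff_forall_sublist]
  | append_cons A m B hA hB ihA ihB =>
    rw [pairwise_stackSort_append_cons_iff hA hB, avoids231_append_cons_iff hA hB, ihA, ihB]

/-- a permutation is sorted by `S` iff it avoids 231. -/
theorem sorted_iff_avoids231 :
    ∀ π : List ℕ, π.Nodup →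
      (stackSort π = List.insertionSort (· ≤ ·) π ↔ Avoids231 π) := by
  intro π _
  rw [← pairwise_stackSort_iff_avoids231]
  constructor
  · intro h
    exact h ▸ List.pairwise_insertionSort _ π
  · intro h
    exact List.Perm.eq_of_pairwise' h (List.pairwise_insertionSort _ π)
      ((stackSort_perm π).trans (List.perm_insertionSort _ π).symm)
end

section
/- The post-order reading of any decreasing binary tree is in the image of the stack sorting operator S. -/
/-! The in-order reading of a decreasing tree `node l n r` is `α n β` with `α`, `β` the in-order
readings of `l`, `r` and `n` their maximum, so `S` recurses exactly along the tree and
`S (inorder T) = postorder T`. -/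

theorem List.foldr_max_bot_eq_of_mem {α : Type*} [LinearOrder α] [OrderBot α] {l : List α} {n : α}
    (hn : n ∈ l) (h : ∀ x ∈ l, x ≤ n) : l.foldr max ⊥ = n :=
  le_antisymm (List.max_le_of_forall_le l n h) (List.le_max_of_le hn le_rfl)

theorem stackSortAux_succ_of_ne_nil {l : List ℕ} (hl : l ≠ []) (fuel : ℕ) :
    stackSortAux (fuel + 1) l =
      stackSortAux fuel (l.takeWhile (· ≠ l.foldr max 0)) ++
        stackSortAux fuel ((l.dropWhile (· ≠ l.foldr max 0)).tail) ++ [l.foldr max 0] := by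
  obtain ⟨x, xs, rfl⟩ := List.exists_cons_of_ne_nil hl
  rfl

theorem stackSortAux_append_cons_of_lt (fuel : ℕ) {α β : List ℕ} {n : ℕ}
    (hα : ∀ x ∈ α, x < n) (hβ : ∀ x ∈ β, x < n) :
    stackSortAux (fuel + 1) (α ++ n :: β) =
      stackSortAux fuel α ++ stackSortAux fuel β ++ [n] := by
  have hmax : (α ++ n :: β).foldr max 0 = n :=
    List.foldr_max_bot_eq_of_mem (by simp) fun x hx => by
      rcases List.mem_append.1 hx with hx | hx
      · exact (hα x hx).le
      rcases List.mem_cons.1 hx with rfl | hx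
      exacts [le_rfl, (hβ x hx).le]
  have hα' : ∀ x ∈ α, decide (x ≠ n) = true := fun x hx => by simpa using (hα x hx).ne
  rw [stackSortAux_succ_of_ne_nil (by simp), hmax, List.takeWhile_append_of_pos hα',
    List.dropWhile_append_of_pos hα']
  simp

theorem stackSortAux_inorder {T : BTree} (hT : T.Decreasing) {fuel : ℕ}
    (hfuel : T.inorder.length ≤ fuel) : stackSortAux fuel T.inorder = T.postorder := by
  induction T generalizing fuel with
  | leaf => cases fuel <;> rfl
  | node l n r ihl ihr =>
    obtain ⟨hl, hr, hln, hrn⟩ := hT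
    obtain ⟨fuel, rfl⟩ : ∃ f, fuel = f + 1 :=
      Nat.exists_eq_add_one.2 (lt_of_lt_of_le (by simp [BTree.inorder]) hfuel)
    simp only [BTree.inorder, List.length_append, List.length_singleton] at hfuel
    simp only [BTree.inorder, BTree.postorder, List.append_assoc, List.singleton_append]
    rw [stackSortAux_append_cons_of_lt fuel hln hrn, ihl hl (by omega), ihr hr (by omega),
      List.append_assoc]

theorem stackSort_inorder {T : BTree} (hT : T.Decreasing) : stackSort T.inorder = T.postorder :=
  stackSortAux_inorder hT le_rfl

/-- the post-order reading of any decreasing binary tree (with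
distinct labels) is in the image of `S`. -/
theorem postorder_mem_image_stackSort :
    ∀ T : BTree, T.Decreasing → T.inorder.Nodup →
      ∃ π : List ℕ, π.Nodup ∧ stackSort π = T.postorder :=
  fun T hT hnodup => ⟨T.inorder, hnodup, stackSort_inorder hT⟩
end

section
/- For every 231-avoiding permutation π, the in-order decreasing binary trees T_in(π) and T_in(P(π)) have the same underlying unlabeled tree shape. -/
/-!
A 231-avoiding permutation `π` of `[1, n]` splits at its maximum as `π = α ++ n :: β'` with every
entry of `α` below every entry of `β'`, so `π = α ⊕ (1 ⊖ β)` for 231-avoiding permutations `α`, `β`.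
Then `P(π) = (P(α) ⊕ 1) ⊖ P(β)` again has its maximum `n` between a shifted copy of `P(α)` and
`P(β)` (this needs `P` to map such permutations to permutations). Both `T_in(π)` and `T_in(P(π))`
therefore have root `n`, and their subtrees are, up to an order-preserving relabelling (which does
not change the shape), `T_in(α)`, `T_in(β)` and `T_in(P(α))`, `T_in(P(β))`. Induction finishes.
-/

open List

namespace List

section

variable {α : Type*}

theorem length_takeWhile_lt {p : α → Bool} {l : List α} {x : α} (hx : x ∈ l) (hpx : p x = false) :
    (l.takeWhile p).length < l.length := by
  have hd : l.dropWhile p ≠ [] := fun h => by simpa [hpx] using dropWhile_eq_nil_iff.1 h x hx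
  have := congrArg length (takeWhile_append_dropWhile (p := p) (l := l))
  rw [length_append] at this
  have := length_pos_iff.2 hd
  omega

theorem length_tail_dropWhile_lt {p : α → Bool} {l : List α} (hl : l ≠ []) :
    (l.dropWhile p).tail.length < l.length := by
  have := length_dropWhile_le p l
  have := length_pos_iff.2 hl
  rw [length_tail]
  omega

variable [DecidableEq α] {l r : List α} {x : α}

theorem takeWhile_ne_append_cons (hx : x ∉ l) : (l ++ x :: r).takeWhile (· ≠ x) = l := by
  rw [takeWhile_append_of_pos fun a ha => by simpa using ne_of_mem_of_not_mem ha hx]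
  simp

theorem tail_dropWhile_ne_append_cons (hx : x ∉ l) :
    ((l ++ x :: r).dropWhile (· ≠ x)).tail = r := by
  rw [dropWhile_append_of_pos fun a ha => by simpa using ne_of_mem_of_not_mem ha hx]
  simp

end

theorem foldr_max_eq_of_forall_le {l : List ℕ} {n : ℕ} (hn : n ∈ l) (h : ∀ x ∈ l, x ≤ n) :
    l.foldr max 0 = n :=
  le_antisymm (max_le_of_forall_le l n h) (le_max_of_le hn le_rfl)

theorem foldr_max_mem {l : List ℕ} (hl : l ≠ []) : l.foldr max 0 ∈ l :=
  maximum_mem (foldr_max_of_ne_nil hl).symm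

theorem foldr_max_map_cons {f : ℕ → ℕ} (hf : Monotone f) (x : ℕ) (xs : List ℕ) :
    ((x :: xs).map f).foldr max 0 = f ((x :: xs).foldr max 0) := by
  induction xs generalizing x with
  | nil => simp
  | cons y ys ih =>
    simp only [map_cons, foldr_cons] at ih ⊢
    rw [ih y]
    simp only [hf.map_max]

theorem le_of_mem_of_perm_range' {l : List ℕ} {k x : ℕ} (h : l.Perm (range' 1 k)) (hx : x ∈ l) :
    x ≤ k := by
  have := h.mem_iff.1 hx
  rw [mem_range'_1] at this
  omega

theorem perm_range'_of_perm_append {l r : List ℕ} {s : ℕ}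
    (h : (l ++ r).Perm (range' s (l.length + r.length))) (hlt : ∀ a ∈ l, ∀ b ∈ r, a < b) :
    l.Perm (range' s l.length) ∧ r.Perm (range' (s + l.length) r.length) := by
  have hl : l.Perm (range' s l.length) := by
    have hnd := h.nodup_iff.2 nodup_range'
    refine ((nodup_append.1 hnd).1.subperm fun a ha => ?_).perm_of_length_le (by simp)
    have hmem : ∀ x, x ∈ l ++ r ↔ s ≤ x ∧ x < s + (l.length + r.length) := by
      simp only [h.mem_iff, mem_range'_1, implies_true]
    have hsa := (hmem a).1 (mem_append_left _ ha)
    -- everything in `[s, a]` lies in `l`, because the entries of `r` exceed `a`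
    have hsub : range' s (a + 1 - s) ⊆ l := fun x hx => by
      rw [mem_range'_1] at hx
      rcases mem_append.1 ((hmem x).2 ⟨hx.1, by omega⟩) with hxl | hxr
      · exact hxl
      · exact absurd (hlt a ha x hxr) (by omega)
    have := ((nodup_range').subperm hsub).length_le
    rw [length_range'] at this
    rw [mem_range'_1]
    omega
  refine ⟨hl, ?_⟩
  rw [← range'_append_1] at h
  exact (perm_append_left_iff _).1 ((hl.append_right r).symm.trans h)

end List

theorem Avoids231.of_append_left {l r : List ℕ} (h : Avoids231 (l ++ r)) : Avoids231 l := by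
  rintro ⟨i, j, k, hij, hjk, hk, h1, h2⟩
  refine h ⟨i, j, k, hij, hjk, by simp; omega, ?_, ?_⟩ <;>
    rwa [getD_append _ _ _ _ (by omega), getD_append _ _ _ _ (by omega)]

theorem Avoids231.of_append_right {l r : List ℕ} (h : Avoids231 (l ++ r)) : Avoids231 r := by
  rintro ⟨i, j, k, hij, hjk, hk, h1, h2⟩
  refine h ⟨l.length + i, l.length + j, l.length + k, by omega, by omega, by simp; omega, ?_, ?_⟩ <;>
    simpa only [getD_append_right _ _ _ _ (Nat.le_add_right _ _), Nat.add_sub_cancel_left]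

theorem Avoids231.map {l : List ℕ} {f : ℕ → ℕ} (hf : Monotone f) (h : Avoids231 l) :
    Avoids231 (l.map f) := by
  rintro ⟨i, j, k, hij, hjk, hk, h1, h2⟩
  rw [length_map] at hk
  have hget : ∀ i < l.length, (l.map f).getD i 0 = f (l.getD i 0) := fun i hi => by simp [hi]
  simp only [hget i (by omega), hget j (by omega), hget k hk] at h1 h2
  exact h ⟨i, j, k, hij, hjk, hk, hf.reflect_lt h1, hf.reflect_lt h2⟩

theorem Avoids231.le_of_mem_of_mem {l r : List ℕ} {n a b : ℕ} (h : Avoids231 (l ++ n :: r))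
    (ha : a ∈ l) (hb : b ∈ r) (han : a < n) : a ≤ b := by
  by_contra! hba
  obtain ⟨i, hi, rfl⟩ := getElem_of_mem ha
  obtain ⟨k, hk, rfl⟩ := getElem_of_mem hb
  refine h ⟨i, l.length, l.length + 1 + k, hi, by omega, by simp; omega, ?_, ?_⟩
  · rw [getD_append _ _ _ _ hi, getD_append_right _ _ _ _ (by omega), getD_eq_getElem _ _ hi]
    simpa [show l.length + 1 + k - l.length = k + 1 by omega, hk] using hba
  · rw [getD_append _ _ _ _ hi, getD_append_right _ _ _ _ le_rfl, getD_eq_getElem _ _ hi]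
    simpa using han

/-- In the notation of `osum` and `ossum`, `π = α ⊕ (1 ⊖ β)`. -/
theorem Avoids231.exists_eq_append_cons_map_add {π : List ℕ} (hav : Avoids231 π)
    (hperm : π.Perm (range' 1 π.length)) (hne : π ≠ []) :
    ∃ α β, π = α ++ (α.length + β.length + 1) :: β.map (· + α.length) ∧
      α.Perm (range' 1 α.length) ∧ β.Perm (range' 1 β.length) ∧
      Avoids231 α ∧ Avoids231 β := by
  generalize hn : π.length = n at hperm
  obtain ⟨α, γ, rfl⟩ := append_of_mem (hperm.mem_iff.2 (mem_range'_1.2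
    ⟨length_pos_iff.2 hne |>.trans_eq hn, Nat.lt_one_add_iff.2 le_rfl⟩) : n ∈ π)
  simp only [length_append, length_cons, ← Nat.add_assoc] at hn
  subst hn
  have hαγ : (α ++ γ).Perm (range' 1 (α.length + γ.length)) := by
    refine (perm_cons _).1 (perm_middle.symm.trans (hperm.trans ?_))
    rw [range'_1_concat, show 1 + (α.length + γ.length) = α.length + γ.length + 1 by omega]
    exact perm_append_singleton _ _
  have hlt : ∀ a ∈ α, ∀ c ∈ γ, a < c := fun a ha c hc =>
    lt_of_le_of_ne
      (hav.le_of_mem_of_mem ha hc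
        (by have := le_of_mem_of_perm_range' hαγ (mem_append_left _ ha); omega))
      ((nodup_append.1 (hαγ.nodup_iff.2 nodup_range')).2.2 a ha c hc)
  obtain ⟨hα, hγ⟩ := perm_range'_of_perm_append hαγ hlt
  refine ⟨α, γ.map (· - α.length), ?_, hα, ?_, hav.of_append_left, ?_⟩
  · have hγα : ∀ c ∈ γ, α.length ≤ c := fun c hc => by
      have := hγ.mem_iff.1 hc
      rw [mem_range'_1] at this
      omega
    have hγ' : (γ.map (· - α.length)).map (· + α.length) = γ := by
      rw [map_map]
      exact (map_congr_left fun c hc => Nat.sub_add_cancel (hγα c hc)).trans (map_id γ)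
    rw [length_map, hγ']
  · simpa [map_sub_range'] using hγ.map (· - α.length)
  · exact ((hav.of_append_right).of_append_right (l := [_])).map
      fun _ _ h => Nat.sub_le_sub_right h _

theorem TinAux_succ_of_ne_nil {l : List ℕ} (hl : l ≠ []) (fuel : ℕ) :
    TinAux (fuel + 1) l =
      .node (TinAux fuel (l.takeWhile (· ≠ l.foldr max 0))) (l.foldr max 0)
        (TinAux fuel ((l.dropWhile (· ≠ l.foldr max 0)).tail)) := by
  cases l with
  | nil => contradiction
  | cons => rfl

theorem TinAux_congr_fuel {f g : ℕ} {l : List ℕ} (hf : l.length ≤ f) (hg : l.length ≤ g) :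
    TinAux f l = TinAux g l := by
  induction f generalizing g l with
  | zero => rw [length_eq_zero_iff.1 (show l.length = 0 by omega)]; cases g <;> rfl
  | succ f ih =>
    rcases eq_or_ne l [] with rfl | hl
    · cases g <;> rfl
    obtain ⟨g, rfl⟩ : ∃ g', g = g' + 1 := ⟨g - 1, by have := length_pos_iff.2 hl; omega⟩
    have h1 := length_takeWhile_lt (foldr_max_mem hl) (p := (· ≠ l.foldr max 0)) (by simp)
    have h2 := length_tail_dropWhile_lt hl (p := (· ≠ l.foldr max 0))
    rw [TinAux_succ_of_ne_nil hl, TinAux_succ_of_ne_nil hl, ih (g := g) (by omega) (by omega),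
      ih (g := g) (by omega) (by omega)]

theorem Tin_append_cons {α β : List ℕ} {n : ℕ} (hα : ∀ a ∈ α, a < n) (hβ : ∀ b ∈ β, b ≤ n) :
    Tin (α ++ n :: β) = .node (Tin α) n (Tin β) := by
  have hnα : n ∉ α := fun h => lt_irrefl n (hα n h)
  have hmax : (α ++ n :: β).foldr max 0 = n := foldr_max_eq_of_forall_le (by simp) (by
    simp only [mem_append, mem_cons]
    rintro x (hx | rfl | hx)
    exacts [(hα x hx).le, le_rfl, hβ x hx])
  unfold Tin
  rw [show (α ++ n :: β).length = α.length + β.length + 1 by simp; omega,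
    TinAux_succ_of_ne_nil (by simp), hmax, takeWhile_ne_append_cons hnα,
    tail_dropWhile_ne_append_cons hnα, TinAux_congr_fuel (g := α.length) (by omega) le_rfl,
    TinAux_congr_fuel (g := β.length) (by omega) le_rfl]

theorem TinAux_map {f : ℕ → ℕ} (hf : StrictMono f) (fuel : ℕ) (l : List ℕ) :
    TinAux fuel (l.map f) = (TinAux fuel l).map f := by
  induction fuel generalizing l with
  | zero => rfl
  | succ fuel ih =>
    cases l with
    | nil => rfl
    | cons x xs =>
      have hpred : ∀ m, (fun y => decide (y ≠ f m)) ∘ f = fun y => decide (y ≠ m) := fun m => by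
        funext y
        simp [hf.injective.eq_iff]
      rw [TinAux_succ_of_ne_nil (by simp), TinAux_succ_of_ne_nil (by simp),
        foldr_max_map_cons hf.monotone, takeWhile_map, dropWhile_map, hpred, ← map_tail, ih, ih]
      rfl

theorem Tin_map {f : ℕ → ℕ} (hf : StrictMono f) (l : List ℕ) : Tin (l.map f) = (Tin l).map f := by
  unfold Tin
  rw [length_map, TinAux_map hf]

theorem BTree.shape_map (f : ℕ → ℕ) (t : BTree) : (t.map f).shape = t.shape := by
  induction t with
  | leaf => rfl
  | node l n r ihl ihr => simp only [BTree.map, BTree.shape, ihl, ihr]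

theorem shape_Tin_map {f : ℕ → ℕ} (hf : StrictMono f) (l : List ℕ) :
    (Tin (l.map f)).shape = (Tin l).shape := by
  rw [Tin_map hf, BTree.shape_map]

theorem PpermAux_succ_of_ne_nil {l : List ℕ} (hl : l ≠ []) (fuel : ℕ) :
    PpermAux (fuel + 1) l =
      (PpermAux fuel (l.takeWhile (· ≠ l.foldr max 0))).map
          (· + ((l.dropWhile (· ≠ l.foldr max 0)).tail).length) ++ [l.foldr max 0] ++
        PpermAux fuel (((l.dropWhile (· ≠ l.foldr max 0)).tail).map
          (· - (l.takeWhile (· ≠ l.foldr max 0)).length)) := by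
  cases l with
  | nil => contradiction
  | cons => rfl

theorem PpermAux_congr_fuel {f g : ℕ} {l : List ℕ} (hf : l.length ≤ f) (hg : l.length ≤ g) :
    PpermAux f l = PpermAux g l := by
  induction f generalizing g l with
  | zero => rw [length_eq_zero_iff.1 (show l.length = 0 by omega)]; cases g <;> rfl
  | succ f ih =>
    rcases eq_or_ne l [] with rfl | hl
    · cases g <;> rfl
    obtain ⟨g, rfl⟩ : ∃ g', g = g' + 1 := ⟨g - 1, by have := length_pos_iff.2 hl; omega⟩
    have h1 := length_takeWhile_lt (foldr_max_mem hl) (p := (· ≠ l.foldr max 0)) (by simp)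
    have h2 := length_tail_dropWhile_lt hl (p := (· ≠ l.foldr max 0))
    rw [PpermAux_succ_of_ne_nil hl, PpermAux_succ_of_ne_nil hl, ih (g := g) (by omega) (by omega),
      ih (g := g) (by rw [length_map]; omega) (by rw [length_map]; omega)]

/-- The defining recursion `P(α ⊕ (1 ⊖ β)) = (P(α) ⊕ 1) ⊖ P(β)`. -/
theorem Pperm_append_cons_map_add {α β : List ℕ} (hα : ∀ a ∈ α, a ≤ α.length)
    (hβ : ∀ b ∈ β, b ≤ β.length) :
    Pperm (α ++ (α.length + β.length + 1) :: β.map (· + α.length)) =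
      (Pperm α).map (· + β.length) ++ (α.length + β.length + 1) :: Pperm β := by
  set n := α.length + β.length + 1
  have hnα : n ∉ α := fun h => by have := hα n h; omega
  have hmax : (α ++ n :: β.map (· + α.length)).foldr max 0 = n :=
    foldr_max_eq_of_forall_le (by simp) (by
      simp only [mem_append, mem_cons, mem_map]
      rintro x (hx | rfl | ⟨b, hb, rfl⟩)
      · have := hα x hx; omega
      · exact le_rfl
      · have := hβ b hb; omega)
  have hβ' : (β.map (· + α.length)).map (· - α.length) = β := by
    simp only [map_map, Function.comp_def, Nat.add_sub_cancel, map_id']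
  unfold Pperm
  rw [show (α ++ n :: β.map (· + α.length)).length = α.length + β.length + 1 by simp; omega,
    PpermAux_succ_of_ne_nil (by simp), hmax, takeWhile_ne_append_cons hnα,
    tail_dropWhile_ne_append_cons hnα, hβ', length_map,
    PpermAux_congr_fuel (g := α.length) (by omega) le_rfl,
    PpermAux_congr_fuel (g := β.length) (by omega) le_rfl]
  simp

theorem Pperm_perm_range' {π : List ℕ} (hperm : π.Perm (range' 1 π.length)) (hav : Avoids231 π) :
    (Pperm π).Perm (range' 1 π.length) := by
  rcases eq_or_ne π [] with rfl | hne
  · rfl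
  obtain ⟨α, β, rfl, hα, hβ, havα, havβ⟩ := hav.exists_eq_append_cons_map_add hperm hne
  rw [Pperm_append_cons_map_add (fun _ => le_of_mem_of_perm_range' hα)
    (fun _ => le_of_mem_of_perm_range' hβ)]
  have hPα : ((Pperm α).map (· + β.length)).Perm (range' (1 + β.length) α.length) := by
    have := (Pperm_perm_range' hα havα).map (β.length + ·)
    rw [map_add_range'] at this
    simpa only [Nat.add_comm β.length] using this
  have hPβ := Pperm_perm_range' hβ havβ
  have hlen : (α ++ (α.length + β.length + 1) :: β.map (· + α.length)).length =
      β.length + α.length + 1 := by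
    simp; omega
  rw [hlen, range'_1_concat, show 1 + (β.length + α.length) = α.length + β.length + 1 by omega,
    ← range'_append_1]
  calc _ ~ (α.length + β.length + 1) :: (Pperm β ++ (Pperm α).map (· + β.length)) :=
        perm_middle.trans (perm_append_comm.cons _)
    _ ~ (α.length + β.length + 1) :: (range' 1 β.length ++ range' (1 + β.length) α.length) :=
        (hPβ.append hPα).cons _
    _ ~ _ := (perm_append_singleton _ _).symm
termination_by π.length
decreasing_by all_goals (subst_vars; simp only [length_append, length_cons, length_map]; omega)

/-- for every 231-avoiding permutation `π`, the trees `T_in(π)`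
and `T_in(P(π))` have the same underlying unlabeled shape. -/
theorem Tin_Pperm_shape :
    ∀ π : List ℕ, π.Perm (List.range' 1 π.length) → Avoids231 π →
      (Tin π).shape = (Tin (Pperm π)).shape := by
  intro π hperm hav
  rcases eq_or_ne π [] with rfl | hne
  · rfl
  obtain ⟨α, β, rfl, hα, hβ, havα, havβ⟩ := hav.exists_eq_append_cons_map_add hperm hne
  have hα_le : ∀ a ∈ α, a ≤ α.length := fun _ => le_of_mem_of_perm_range' hα
  have hβ_le : ∀ b ∈ β, b ≤ β.length := fun _ => le_of_mem_of_perm_range' hβ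
  have hPα_le : ∀ a ∈ Pperm α, a ≤ α.length :=
    fun _ => le_of_mem_of_perm_range' (Pperm_perm_range' hα havα)
  have hPβ_le : ∀ b ∈ Pperm β, b ≤ β.length :=
    fun _ => le_of_mem_of_perm_range' (Pperm_perm_range' hβ havβ)
  rw [Pperm_append_cons_map_add hα_le hβ_le,
    Tin_append_cons (fun a ha => by have := hα_le a ha; omega)
      (by simpa using fun b hb => by have := hβ_le b hb; omega),
    Tin_append_cons (by simpa using fun a ha => by have := hPα_le a ha; omega)
      (fun b hb => by have := hPβ_le b hb; omega)]
  simp only [BTree.shape, shape_Tin_map (f := (· + _)) (strictMono_id.add_const _),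
    Tin_Pperm_shape α hα havα, Tin_Pperm_shape β hβ havβ]
termination_by π => π.length
decreasing_by all_goals (subst_vars; simp only [length_append, length_cons, length_map]; omega)
end

section
/- Let A be any composition of the operators S (stack sort) and R (reversal), let τ be a permutation, and suppose x, y are values of τ such that no value larger than max(x,y) occurs between x and y in τ. Then no value larger than max(x,y) occurs between x and y in A(τ). -/
/-! The condition says that no subsequence `x z y` or `y z x` of the list has `z > max x y`.
Reversal turns such patterns into each other. For stack sorting, write `l = α M β` with `M`
maximal, so that `S(l) = S(α) S(β) M`. A pattern `a z b` in `S(l)` with `z > max a b` has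
`z ≤ M`, hence `b ≠ M`, so it lies in `S(α) S(β)`: either inside `S(α)` or `S(β)`, which
is excluded by induction, or with `a ∈ α` and `b ∈ β`, and then `a M b` is such a pattern
in `l`. -/

namespace List

variable {α : Type*}

theorem eq_takeWhile_ne_append_cons_tail_dropWhile_ne [DecidableEq α] {l : List α} {a : α}
    (h : a ∈ l) : l = l.takeWhile (· ≠ a) ++ a :: (l.dropWhile (· ≠ a)).tail := by
  induction l with
  | nil => simp at h
  | cons x xs ih =>
    by_cases hx : x = a
    · simp [hx]
    · conv_lhs => rw [ih ((mem_cons.mp h).resolve_left (Ne.symm hx))]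
      simp [hx]

theorem triple_sublist_append {a b c : α} {u v : List α} (h : [a, b, c] <+ u ++ v) :
    [a, b, c] <+ u ∨ [a, b, c] <+ v ∨ (a ∈ u ∧ c ∈ v) := by
  obtain ⟨l₁, l₂, hl, h₁, h₂⟩ := sublist_append_iff.mp h
  rcases l₁ with _ | ⟨_, _ | ⟨_, _ | ⟨_, _ | ⟨_, _⟩⟩⟩⟩ <;>
    simp only [cons_append, nil_append, cons.injEq, nil_eq, reduceCtorEq, and_false] at hl
  · exact Or.inr (Or.inl (hl ▸ h₂))
  · obtain ⟨rfl, rfl⟩ := hl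
    exact Or.inr (Or.inr ⟨h₁.subset (by simp), h₂.subset (by simp)⟩)
  · obtain ⟨rfl, rfl, rfl⟩ := hl
    exact Or.inr (Or.inr ⟨h₁.subset (by simp), h₂.subset (by simp)⟩)
  · obtain ⟨rfl, rfl, rfl, rfl⟩ := hl
    exact Or.inl h₁

theorem triple_sublist_iff {l : List α} {a b c : α} (d : α) :
    [a, b, c] <+ l ↔ ∃ i j k, i < j ∧ j < k ∧ k < l.length ∧
      l.getD i d = a ∧ l.getD j d = b ∧ l.getD k d = c := by
  constructor
  · rw [sublist_iff_exists_orderEmbedding_getElem?_eq]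
    rintro ⟨f, hf⟩
    refine ⟨f 0, f 1, f 2, f.strictMono (by norm_num), f.strictMono (by norm_num),
      (getElem?_eq_some_iff.mp (hf 2).symm).1, ?_, ?_, ?_⟩ <;>
      simp [getD_eq_getElem?_getD, ← hf]
  · rw [sublist_iff_exists_fin_orderEmbedding_get_eq]
    rintro ⟨i, j, k, hij, hjk, hk, rfl, rfl, rfl⟩
    have hi : i < l.length := by omega
    have hj : j < l.length := by omega
    refine ⟨OrderEmbedding.ofStrictMono ![⟨i, hi⟩, ⟨j, hj⟩, ⟨k, hk⟩] ?_, ?_⟩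
    · rw [Fin.strictMono_iff_lt_succ]
      intro t
      fin_cases t <;> simpa [Fin.lt_def]
    · intro t
      fin_cases t <;> simp [hi, hj, hk]

end List

open List

theorem stackSortAux_nil (fuel : ℕ) : stackSortAux fuel [] = [] := by
  cases fuel <;> rfl

theorem exists_max_split_stackSortAux_succ {l : List ℕ} (fuel : ℕ) (h : l ≠ []) :
    ∃ α M β, l = α ++ M :: β ∧ (∀ w ∈ l, w ≤ M) ∧
      stackSortAux (fuel + 1) l = stackSortAux fuel α ++ stackSortAux fuel β ++ [M] := by
  obtain ⟨x, xs, rfl⟩ := exists_cons_of_ne_nil h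
  have hM : (x :: xs).foldr max 0 ∈ x :: xs := maximum_mem (foldr_max_of_ne_nil h).symm
  exact ⟨_, _, _, eq_takeWhile_ne_append_cons_tail_dropWhile_ne hM,
    fun w hw => le_max_of_le hw le_rfl, rfl⟩

theorem stackSortAux_perm {fuel : ℕ} {l : List ℕ} (hf : l.length ≤ fuel) :
    stackSortAux fuel l ~ l := by
  induction fuel generalizing l with
  | zero => simp_all [stackSortAux_nil]
  | succ fuel ih =>
    rcases eq_or_ne l [] with rfl | hne
    · simp [stackSortAux_nil]
    obtain ⟨α, M, β, rfl, -, hS⟩ := exists_max_split_stackSortAux_succ fuel hne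
    simp only [length_append, length_cons] at hf
    rw [hS]
    calc stackSortAux fuel α ++ stackSortAux fuel β ++ [M]
        ~ α ++ β ++ [M] := ((ih (by omega)).append (ih (by omega))).append_right [M]
      _ ~ M :: (α ++ β) := perm_append_singleton M _
      _ ~ α ++ M :: β := perm_middle.symm

theorem le_max_of_sublist_stackSortAux {fuel : ℕ} {l : List ℕ} {a b z : ℕ}
    (hf : l.length ≤ fuel) (hl : ∀ w, [a, w, b] <+ l → w ≤ max a b)
    (hz : [a, z, b] <+ stackSortAux fuel l) : z ≤ max a b := by
  induction fuel generalizing l with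
  | zero => simp_all [stackSortAux_nil]
  | succ fuel ih =>
    rcases eq_or_ne l [] with rfl | hne
    · simp [stackSortAux_nil] at hz
    by_contra! hlt
    obtain ⟨α, M, β, rfl, hmax, hS⟩ := exists_max_split_stackSortAux_succ fuel hne
    have hzM : z ≤ M := hmax z ((stackSortAux_perm hf).subset (hz.subset (by simp)))
    simp only [length_append, length_cons] at hf
    rw [hS] at hz
    have hz' : [a, z, b] <+ stackSortAux fuel α ++ stackSortAux fuel β := by
      rw [← reverse_sublist, reverse_append] at hz
      rcases sublist_cons_iff.mp hz with h | ⟨r, hr, -⟩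
      · exact reverse_sublist.mp h
      · have hbM : b = M := (cons.inj hr).1
        omega
    have hαl : α <+ α ++ M :: β := sublist_append_left _ _
    have hβl : β <+ α ++ M :: β := (sublist_cons_self M β).trans (sublist_append_right _ _)
    rcases triple_sublist_append hz' with h | h | ⟨ha, hb⟩
    · exact hlt.not_ge (ih (by omega) (fun w hw => hl w (hw.trans hαl)) h)
    · exact hlt.not_ge (ih (by omega) (fun w hw => hl w (hw.trans hβl)) h)
    · have ha : a ∈ α := (stackSortAux_perm (by omega)).subset ha
      have hb : b ∈ β := (stackSortAux_perm (by omega)).subset hb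
      have hM : [a, M, b] <+ α ++ M :: β :=
        (singleton_sublist.mpr ha).append ((singleton_sublist.mpr hb).cons_cons M)
      exact (hl M hM).not_gt (hlt.trans_le hzM)

theorem noLargerBetween_iff {l : List ℕ} {x y : ℕ} :
    NoLargerBetween l x y ↔ ∀ z, [x, z, y] <+ l ∨ [y, z, x] <+ l → z ≤ max x y := by
  simp only [triple_sublist_iff 0]
  constructor
  · rintro h z (⟨i, j, k, hij, hjk, hk, hi, rfl, hk'⟩ |
      ⟨i, j, k, hij, hjk, hk, hi, rfl, hk'⟩)
    · exact h i j k hij hjk hk (Or.inl ⟨hi, hk'⟩)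
    · exact h i j k hij hjk hk (Or.inr ⟨hi, hk'⟩)
  · rintro h i j k hij hjk hk (⟨hi, hk'⟩ | ⟨hi, hk'⟩)
    · exact h _ (Or.inl ⟨i, j, k, hij, hjk, hk, hi, rfl, hk'⟩)
    · exact h _ (Or.inr ⟨i, j, k, hij, hjk, hk, hi, rfl, hk'⟩)

theorem NoLargerBetween.reverse {l : List ℕ} {x y : ℕ} (h : NoLargerBetween l x y) :
    NoLargerBetween l.reverse x y := by
  rw [noLargerBetween_iff] at h ⊢
  intro z hz
  apply h z
  simpa only [sublist_reverse_iff, reverse_cons, reverse_nil, nil_append, cons_append,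
    or_comm] using hz

theorem NoLargerBetween.stackSort {l : List ℕ} {x y : ℕ} (h : NoLargerBetween l x y) :
    NoLargerBetween (stackSort l) x y := by
  rw [noLargerBetween_iff] at h ⊢
  rintro z (hz | hz)
  · exact le_max_of_sublist_stackSortAux le_rfl (fun w hw => h w (Or.inl hw)) hz
  · rw [max_comm] at h ⊢
    exact le_max_of_sublist_stackSortAux le_rfl (fun w hw => h w (Or.inr hw)) hz

/-- if no value larger than `max x y` occurs between `x` and `y`
in `τ`, the same holds in `A(τ)` for any composition `A` of `S` and `R`. -/
theorem noLargerBetween_applyOps :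
    ∀ (ops : List SOp) (τ : List ℕ), τ.Nodup →
      ∀ x y : ℕ, x ∈ τ → y ∈ τ →
        NoLargerBetween τ x y → NoLargerBetween (applyOps ops τ) x y := by
  intro ops τ _ x y _ _ h
  induction ops with
  | nil => exact h
  | cons op ops ih =>
    cases op
    · exact ih.stackSort
    · exact ih.reverse
end
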